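/- Let n and p be positive integers, A_1 a p × n matrix of polynomials with integer coefficients, and b_1 a vector of p such polynomials, and for each positive integer t let L_1(t) = {x ∈ ℤ^n : x ≥ 0 and A_1(t)x = b_1(t)}. Let r be a positive integer such that for all sufficiently large t, every x ∈ L_1(t) satisfies 0 ≤ x_i < t^r for all i. Define the base-t digit map φ_t : ℤ^{rn} → ℤ^n by φ_t(y)_i = Σ_{j=1}^r y_{i,j} t^{j−1}, and let L'_1(t) = {y ∈ {0, …, t−1}^{rn} : A_1(t) φ_t(y) = b_1(t)}. Then there exist a finite set 𝔖, a positive integer q, a q × rn matrix A with constant integer entries, and for each α ∈ 𝔖 a vector b(α) of q polynomials with integer coefficients, such that, setting K(α,t) = {y ∈ {0, …, t−1}^{rn} : A y = b(α)(t)}, for all sufficiently large t the sets K(α,t), α ∈ 𝔖, are pairwise disjoint and their union equals L'_1(t). -/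
import Mathlib


/-- Evaluation of an integer polynomial at a positive integer `t`. -/
def evalAt (p : Polynomial ℤ) (t : ℕ) : ℤ := p.eval (t : ℤ)

/-- The base-`t` digit map: it sends the block of digits `(y i 0, …, y i (r-1))`
to the integer `∑ j, y i j * t^j`. -/
def digitMap {ι : Type*} (r t : ℕ) (y : ι → Fin r → ℤ) : ι → ℤ :=
  fun i => ∑ j : Fin r, y i j * (t : ℤ) ^ (j : ℕ)

/-- `L₁(t) = {x ∈ ℤ^n : x ≥ 0, A₁(t) x = b₁(t)}`. -/
def latticeL1 {n p : ℕ} (A1 : Matrix (Fin p) (Fin n) (Polynomial ℤ))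
    (b1 : Fin p → Polynomial ℤ) (t : ℕ) : Set (Fin n → ℤ) :=
  {x | (∀ j, 0 ≤ x j) ∧ ∀ i, ∑ j, evalAt (A1 i j) t * x j = evalAt (b1 i) t}

/-- `L₁'(t)`: digit vectors in `{0,…,t−1}^{rn}` with `A₁(t) φ_t(y) = b₁(t)`. -/
def latticeL1' {n p : ℕ} (A1 : Matrix (Fin p) (Fin n) (Polynomial ℤ))
    (b1 : Fin p → Polynomial ℤ) (r t : ℕ) : Set (Fin n → Fin r → ℤ) :=
  {y | (∀ k j, 0 ≤ y k j ∧ y k j ≤ (t : ℤ) - 1) ∧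
    ∀ i, ∑ k, evalAt (A1 i k) t * digitMap r t y k = evalAt (b1 i) t}

lemma geomSumLe (T : ℤ) (hT : 2 ≤ T) (k : ℕ) :
    ∑ m ∈ Finset.range (k + 1), T ^ m ≤ 2 * T ^ k := by
  induction k with
  | zero => simp
  | succ k ih =>
    rw [Finset.sum_range_succ]
    have hTk : (0:ℤ) ≤ T ^ k := pow_nonneg (by linarith) k
    have h1 : (2:ℤ) * T ^ k ≤ T ^ (k+1) := by
      rw [pow_succ]; nlinarith
    have h2 : T ^ (k+1) = T ^ k * T := pow_succ T k
    nlinarith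

lemma carries_exist (M : ℕ) (C T : ℤ) (hT : 2 ≤ T) (e : ℕ → ℤ)
    (hbd : ∀ m, |e m| ≤ C * T) (hz : ∀ m, M ≤ m → e m = 0)
    (hsum : ∑ m ∈ Finset.range M, e m * T ^ m = 0) :
    ∃ v : ℕ → ℤ, v 0 = 0 ∧ (∀ m, |v m| ≤ 2 * C) ∧ (∀ m, M ≤ m → v m = 0) ∧
      ∀ m, e m = v m - T * v (m + 1) := by
  have hC0 : 0 ≤ C := by
    have h := le_trans (abs_nonneg _) (hbd 0)
    nlinarith
  set v : ℕ → ℤ := fun m => ∑ m' ∈ Finset.Ico m M, e m' * T ^ (m' - m) with hv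
  have hvz : ∀ m, M ≤ m → v m = 0 := by
    intro m hm
    simp [hv, Finset.Ico_eq_empty_of_le hm]
  have hstep : ∀ m, v m = e m + T * v (m + 1) := by
    intro m
    by_cases hm : m < M
    · rw [hv]
      simp only
      rw [Finset.sum_eq_sum_Ico_succ_bot hm, Nat.sub_self, pow_zero, mul_one,
        Finset.mul_sum]
      congr 1
      refine Finset.sum_congr rfl fun m' hm' => ?_
      have h1 : m + 1 ≤ m' := (Finset.mem_Ico.mp hm').1
      have h2 : m' - m = (m' - (m+1)) + 1 := by omega
      rw [h2, pow_succ]; ring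
    · push_neg at hm
      rw [hvz m hm, hvz (m+1) (by omega), hz m hm]; ring
  have hv0 : v 0 = 0 := by
    rw [hv]; simp only
    rw [← Finset.range_eq_Ico] at *
    simpa using hsum
  have hhead : ∀ k, T ^ k * v k = - ∑ m ∈ Finset.range k, e m * T ^ m := by
    intro k
    induction k with
    | zero => simp [hv0]
    | succ k ih =>
      rw [Finset.sum_range_succ]
      linear_combination ih - T ^ k * hstep k
  have hbnd : ∀ m, |v m| ≤ 2 * C := by
    intro m
    match m with
    | 0 => rw [hv0]; simp; linarith
    | k+1 =>
      have hTpos : (0:ℤ) < T ^ (k+1) := pow_pos (by linarith) _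
      have h1 : |∑ m ∈ Finset.range (k+1), e m * T ^ m| ≤ C * T * (2 * T ^ k) := by
        calc |∑ m ∈ Finset.range (k+1), e m * T ^ m|
            ≤ ∑ m ∈ Finset.range (k+1), |e m * T ^ m| := Finset.abs_sum_le_sum_abs _ _
          _ ≤ ∑ m ∈ Finset.range (k+1), C * T * T ^ m := by
              refine Finset.sum_le_sum fun m _ => ?_
              rw [abs_mul, abs_pow, abs_of_nonneg (by linarith : (0:ℤ) ≤ T)]
              exact mul_le_mul_of_nonneg_right (hbd m) (pow_nonneg (by linarith) m)
          _ = C * T * ∑ m ∈ Finset.range (k+1), T ^ m := by rw [Finset.mul_sum]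
          _ ≤ C * T * (2 * T ^ k) := by
              refine mul_le_mul_of_nonneg_left (geomSumLe T hT k) (by nlinarith)
      have h2 : T ^ (k+1) * |v (k+1)| ≤ 2 * C * T ^ (k+1) := by
        have h3 : |T ^ (k+1) * v (k+1)| ≤ 2 * C * T ^ (k+1) := by
          rw [hhead (k+1), abs_neg]
          calc |∑ m ∈ Finset.range (k+1), e m * T ^ m| ≤ C * T * (2 * T ^ k) := h1
            _ = 2 * C * T ^ (k+1) := by rw [pow_succ]; ring
        rwa [abs_mul, abs_of_nonneg (le_of_lt hTpos)] at h3
      exact le_of_mul_le_mul_left (by linarith [h2]) hTpos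
  exact ⟨v, hv0, hbnd, hvz, fun m => by linear_combination - hstep m⟩


/-- there are a finite index set (here `Fin s`), `q > 0`, a constant
integer matrix `A`, and polynomial vectors `b(α)` such that for all sufficiently
large `t` the sets `K(α,t) = {y ∈ {0,…,t−1}^{rn} : A y = b(α)(t)}` are pairwise
disjoint and their union is `L₁'(t)`. -/
theorem digit_decomposition (n p : ℕ) (hn : 0 < n) (hp : 0 < p)
    (A1 : Matrix (Fin p) (Fin n) (Polynomial ℤ)) (b1 : Fin p → Polynomial ℤ)
    (r : ℕ) (hr : 0 < r)
    (hbound : ∃ N : ℕ, ∀ t : ℕ, N ≤ t →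
      ∀ x ∈ latticeL1 A1 b1 t, ∀ i, 0 ≤ x i ∧ x i < (t : ℤ) ^ r) :
    ∃ (s q : ℕ), 0 < q ∧
      ∃ (A : Matrix (Fin q) (Fin n × Fin r) ℤ) (bb : Fin s → Fin q → Polynomial ℤ)
        (N : ℕ), ∀ t : ℕ, N ≤ t →
        (∀ α β : Fin s, α ≠ β →
          Disjoint
            {y : Fin n → Fin r → ℤ | (∀ k j, 0 ≤ y k j ∧ y k j ≤ (t : ℤ) - 1) ∧
              ∀ i, ∑ kj : Fin n × Fin r, A i kj * y kj.1 kj.2 = evalAt (bb α i) t}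
            {y : Fin n → Fin r → ℤ | (∀ k j, 0 ≤ y k j ∧ y k j ≤ (t : ℤ) - 1) ∧
              ∀ i, ∑ kj : Fin n × Fin r, A i kj * y kj.1 kj.2 = evalAt (bb β i) t}) ∧
        (⋃ α : Fin s,
          {y : Fin n → Fin r → ℤ | (∀ k j, 0 ≤ y k j ∧ y k j ≤ (t : ℤ) - 1) ∧
            ∀ i, ∑ kj : Fin n × Fin r, A i kj * y kj.1 kj.2 = evalAt (bb α i) t})
          = latticeL1' A1 b1 r t := by
  classical
  -- a common bound M'+1 on the degrees of all relevant polynomials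
  obtain ⟨M', hdegA, hdegb⟩ : ∃ M' : ℕ,
      (∀ (i : Fin p) (k : Fin n) (j : Fin r),
        (A1 i k * Polynomial.X ^ (j:ℕ)).natDegree < M' + 1) ∧
      (∀ i, (b1 i).natDegree < M' + 1) := by
    refine ⟨(Finset.univ.sup fun ik : Fin p × Fin n => (A1 ik.1 ik.2).natDegree) + r +
      (Finset.univ.sup fun i : Fin p => (b1 i).natDegree), ?_, ?_⟩
    · intro i k j
      have h1 : (A1 i k * Polynomial.X ^ (j:ℕ)).natDegree ≤ (A1 i k).natDegree + (j:ℕ) := by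
        refine le_trans Polynomial.natDegree_mul_le ?_
        simp [Polynomial.natDegree_X_pow]
      have h2 : (A1 i k).natDegree ≤
          Finset.univ.sup fun ik : Fin p × Fin n => (A1 ik.1 ik.2).natDegree :=
        Finset.le_sup (f := fun ik : Fin p × Fin n => (A1 ik.1 ik.2).natDegree) (Finset.mem_univ (i, k))
      have h3 : (j:ℕ) < r := j.isLt
      omega
    · intro i
      have h2 : (b1 i).natDegree ≤ Finset.univ.sup fun i : Fin p => (b1 i).natDegree :=
        Finset.le_sup (f := fun i : Fin p => (b1 i).natDegree) (Finset.mem_univ i)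
      omega
  set M : ℕ := M' + 1 with hMdef
  -- constant coefficients
  set c : Fin p → Fin n → Fin r → ℕ → ℤ :=
    fun i k j m => (A1 i k * Polynomial.X ^ (j:ℕ)).coeff m with hcdef
  set β : Fin p → ℕ → ℤ := fun i m => (b1 i).coeff m with hβdef
  set C : ℤ := 1 + (∑ i : Fin p, ∑ kj : Fin n × Fin r, ∑ m ∈ Finset.range M, |c i kj.1 kj.2 m|)
      + (∑ i : Fin p, ∑ m ∈ Finset.range M, |β i m|) with hCdef
  have habs_nonneg1 : 0 ≤ ∑ i : Fin p, ∑ kj : Fin n × Fin r, ∑ m ∈ Finset.range M, |c i kj.1 kj.2 m| :=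
    Finset.sum_nonneg fun _ _ => Finset.sum_nonneg fun _ _ => Finset.sum_nonneg fun _ _ => abs_nonneg _
  have habs_nonneg2 : 0 ≤ ∑ i : Fin p, ∑ m ∈ Finset.range M, |β i m| :=
    Finset.sum_nonneg fun _ _ => Finset.sum_nonneg fun _ _ => abs_nonneg _
  have hC1 : 1 ≤ C := by rw [hCdef]; linarith
  have hczero : ∀ (i : Fin p) (k : Fin n) (j : Fin r) (m : ℕ), M ≤ m → c i k j m = 0 := by
    intro i k j m hm
    exact Polynomial.coeff_eq_zero_of_natDegree_lt (lt_of_lt_of_le (hdegA i k j) hm)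
  have hβzero : ∀ (i : Fin p) (m : ℕ), M ≤ m → β i m = 0 := by
    intro i m hm
    exact Polynomial.coeff_eq_zero_of_natDegree_lt (lt_of_lt_of_le (hdegb i) hm)
  have hcb : ∀ (i : Fin p) (m : ℕ),
      (∑ kj : Fin n × Fin r, |c i kj.1 kj.2 m|) + |β i m| ≤ C := by
    intro i m
    by_cases hm : m < M
    · have h1 : (∑ kj : Fin n × Fin r, |c i kj.1 kj.2 m|)
          ≤ ∑ kj : Fin n × Fin r, ∑ m' ∈ Finset.range M, |c i kj.1 kj.2 m'| := by
        refine Finset.sum_le_sum fun kj _ => ?_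
        exact Finset.single_le_sum (f := fun m' => |c i kj.1 kj.2 m'|)
          (fun _ _ => abs_nonneg _) (Finset.mem_range.mpr hm)
      have h2 : (∑ kj : Fin n × Fin r, ∑ m' ∈ Finset.range M, |c i kj.1 kj.2 m'|)
          ≤ ∑ i' : Fin p, ∑ kj : Fin n × Fin r, ∑ m' ∈ Finset.range M, |c i' kj.1 kj.2 m'| :=
        Finset.single_le_sum (f := fun i' => ∑ kj : Fin n × Fin r, ∑ m' ∈ Finset.range M, |c i' kj.1 kj.2 m'|)
          (fun _ _ => Finset.sum_nonneg fun _ _ => Finset.sum_nonneg fun _ _ => abs_nonneg _)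
          (Finset.mem_univ i)
      have h3 : |β i m| ≤ ∑ m' ∈ Finset.range M, |β i m'| :=
        Finset.single_le_sum (f := fun m' => |β i m'|) (fun _ _ => abs_nonneg _)
          (Finset.mem_range.mpr hm)
      have h4 : (∑ m' ∈ Finset.range M, |β i m'|) ≤ ∑ i' : Fin p, ∑ m' ∈ Finset.range M, |β i' m'| :=
        Finset.single_le_sum (f := fun i' => ∑ m' ∈ Finset.range M, |β i' m'|)
          (fun _ _ => Finset.sum_nonneg fun _ _ => abs_nonneg _) (Finset.mem_univ i)
      rw [hCdef]; linarith
    · push_neg at hm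
      have h1 : ∀ kj : Fin n × Fin r, |c i kj.1 kj.2 m| = 0 := fun kj => by
        rw [hczero i kj.1 kj.2 m hm]; simp
      rw [Finset.sum_congr rfl fun kj _ => h1 kj, hβzero i m hm]
      simp; linarith
  -- the linear forms
  set Lf : Fin p → ℕ → (Fin n → Fin r → ℤ) → ℤ :=
    fun i m y => ∑ kj : Fin n × Fin r, c i kj.1 kj.2 m * y kj.1 kj.2 with hLfdef
  -- row identity
  have hrow : ∀ (t : ℕ) (y : Fin n → Fin r → ℤ) (i : Fin p),
      ∑ k, evalAt (A1 i k) t * digitMap r t y k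
        = ∑ m ∈ Finset.range M, Lf i m y * (t:ℤ) ^ m := by
    intro t y i
    calc ∑ k, evalAt (A1 i k) t * digitMap r t y k
        = ∑ k, ∑ j : Fin r, ∑ m ∈ Finset.range M, c i k j m * (t:ℤ)^m * y k j := by
          refine Finset.sum_congr rfl fun k _ => ?_
          rw [evalAt, digitMap, Finset.mul_sum]
          refine Finset.sum_congr rfl fun j _ => ?_
          have he : (A1 i k * Polynomial.X ^ (j:ℕ)).eval (t:ℤ)
              = ∑ m ∈ Finset.range M, c i k j m * (t:ℤ)^m :=
            Polynomial.eval_eq_sum_range' (hdegA i k j) _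
          have h2 : (A1 i k).eval (t:ℤ) * (y k j * (t:ℤ)^(j:ℕ))
              = (A1 i k * Polynomial.X ^ (j:ℕ)).eval (t:ℤ) * y k j := by
            simp [Polynomial.eval_mul]; ring
          rw [h2, he, Finset.sum_mul]
      _ = ∑ kj : Fin n × Fin r, ∑ m ∈ Finset.range M, c i kj.1 kj.2 m * (t:ℤ)^m * y kj.1 kj.2 := by
          rw [Fintype.sum_prod_type]
      _ = ∑ m ∈ Finset.range M, ∑ kj : Fin n × Fin r, c i kj.1 kj.2 m * (t:ℤ)^m * y kj.1 kj.2 :=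
          Finset.sum_comm
      _ = ∑ m ∈ Finset.range M, Lf i m y * (t:ℤ)^m := by
          refine Finset.sum_congr rfl fun m _ => ?_
          rw [hLfdef]; simp only; rw [Finset.sum_mul]
          exact Finset.sum_congr rfl fun kj _ => by ring
  have hb1eval : ∀ (t : ℕ) (i : Fin p),
      evalAt (b1 i) t = ∑ m ∈ Finset.range M, β i m * (t:ℤ)^m := fun t i =>
    Polynomial.eval_eq_sum_range' (hdegb i) _
  -- carries box and index set
  set Box : Finset ℤ := Finset.Icc (-(2*C)) (2*C) with hBoxdef
  set S := Fin p → Fin M' → {x : ℤ // x ∈ Box} with hSdef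
  set eqv : Fin (Fintype.card S) ≃ S := (Fintype.equivFin S).symm with heqvdef
  set V : S → Fin p → ℕ → ℤ :=
    fun u i m => if h : 0 < m ∧ m - 1 < M' then (u i ⟨m-1, h.2⟩ : ℤ) else 0 with hVdef
  have hV0 : ∀ u i, V u i 0 = 0 := by intro u i; rw [hVdef]; simp
  have hVM : ∀ u i m, M ≤ m → V u i m = 0 := by
    intro u i m hm; rw [hVdef]; simp only
    rw [dif_neg]; omega
  have hVval : ∀ (u : S) (i : Fin p) (j : Fin M'), V u i ((j:ℕ)+1) = (u i j : ℤ) := by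
    intro u i j
    rw [hVdef]; simp only
    rw [dif_pos ⟨Nat.succ_pos _, by simpa using j.isLt⟩]
    congr 1
  refine ⟨Fintype.card S, p * M, Nat.mul_pos hp (Nat.succ_pos M'),
    (fun q' kj => c (finProdFinEquiv.symm q').1 kj.1 kj.2 ((finProdFinEquiv.symm q').2 : ℕ)),
    (fun α q' => Polynomial.C (β (finProdFinEquiv.symm q').1 ((finProdFinEquiv.symm q').2 : ℕ)
        + V (eqv α) (finProdFinEquiv.symm q').1 ((finProdFinEquiv.symm q').2 : ℕ))
      - Polynomial.C (V (eqv α) (finProdFinEquiv.symm q').1 (((finProdFinEquiv.symm q').2 : ℕ) + 1))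
        * Polynomial.X),
    2, ?_⟩
  intro t ht
  have ht2 : (2:ℤ) ≤ (t:ℤ) := by exact_mod_cast ht
  -- reformulate membership in K α
  have hKmem : ∀ (α : Fin (Fintype.card S)) (y : Fin n → Fin r → ℤ),
      (∀ q' : Fin (p * M), ∑ kj : Fin n × Fin r,
          c (finProdFinEquiv.symm q').1 kj.1 kj.2 ((finProdFinEquiv.symm q').2 : ℕ) * y kj.1 kj.2
        = evalAt (Polynomial.C (β (finProdFinEquiv.symm q').1 ((finProdFinEquiv.symm q').2 : ℕ)
            + V (eqv α) (finProdFinEquiv.symm q').1 ((finProdFinEquiv.symm q').2 : ℕ))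
          - Polynomial.C (V (eqv α) (finProdFinEquiv.symm q').1 (((finProdFinEquiv.symm q').2 : ℕ) + 1))
            * Polynomial.X) t)
      ↔ (∀ (i : Fin p) (m : Fin M), Lf i (m:ℕ) y
          = β i (m:ℕ) + V (eqv α) i (m:ℕ) - V (eqv α) i ((m:ℕ)+1) * (t:ℤ)) := by
    intro α y
    constructor
    · intro h i m
      have h2 := h (finProdFinEquiv (i, m))
      simp only [Equiv.symm_apply_apply] at h2
      rw [hLfdef]
      simpa [evalAt] using h2
    · intro h q'
      obtain ⟨⟨i, m⟩, rfl⟩ := finProdFinEquiv.surjective q'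
      simp only [Equiv.symm_apply_apply]
      have h2 := h i m
      rw [hLfdef] at h2
      simpa [evalAt] using h2
  constructor
  · -- disjointness
    intro α γ hne
    rw [Set.disjoint_left]
    intro y hy1 hy2
    apply hne
    have e1 := (hKmem α y).mp hy1.2
    have e2 := (hKmem γ y).mp hy2.2
    have hrel : ∀ (i : Fin p) (m : ℕ),
        V (eqv α) i m - V (eqv γ) i m
          = (t:ℤ) * (V (eqv α) i (m+1) - V (eqv γ) i (m+1)) := by
      intro i m
      by_cases hm : m < M
      · have h1 : Lf i m y = β i m + V (eqv α) i m - V (eqv α) i (m+1) * (t:ℤ) :=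
          e1 i ⟨m, hm⟩
        have h2 : Lf i m y = β i m + V (eqv γ) i m - V (eqv γ) i (m+1) * (t:ℤ) :=
          e2 i ⟨m, hm⟩
        linear_combination h2 - h1
      · push_neg at hm
        rw [hVM _ _ _ hm, hVM _ _ _ hm, hVM _ _ _ (by omega), hVM _ _ _ (by omega)]
        ring
    have hpow : ∀ (i : Fin p) (m j : ℕ),
        V (eqv α) i m - V (eqv γ) i m
          = (t:ℤ)^j * (V (eqv α) i (m+j) - V (eqv γ) i (m+j)) := by
      intro i m j
      induction j generalizing m with
      | zero => simp
      | succ j ih =>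
        have harith : m + 1 + j = m + (j + 1) := by omega
        rw [hrel i m, ih (m+1), harith, pow_succ]
        ring
    have hVeq : ∀ (i : Fin p) (m : ℕ), V (eqv α) i m = V (eqv γ) i m := by
      intro i m
      have h3 := hpow i m M
      rw [hVM (eqv α) i (m+M) (by omega), hVM (eqv γ) i (m+M) (by omega)] at h3
      have h4 : V (eqv α) i m - V (eqv γ) i m = 0 := by simpa using h3
      linarith
    apply eqv.injective
    funext i j
    apply Subtype.ext
    have h5 := hVeq i ((j:ℕ)+1)
    rwa [hVval, hVval] at h5
  · -- union
    ext y
    simp only [Set.mem_iUnion, Set.mem_setOf_eq]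
    constructor
    · rintro ⟨α, hbnds, heqs⟩
      refine ⟨hbnds, ?_⟩
      have key := (hKmem α y).mp heqs
      intro i
      rw [hrow t y i, hb1eval t i]
      have h1 : ∀ m ∈ Finset.range M, Lf i m y * (t:ℤ)^m
          = β i m * (t:ℤ)^m
            + (V (eqv α) i m * (t:ℤ)^m - V (eqv α) i (m+1) * (t:ℤ)^(m+1)) := by
        intro m hm
        have k2 : Lf i m y = β i m + V (eqv α) i m - V (eqv α) i (m+1) * (t:ℤ) :=
          key i ⟨m, Finset.mem_range.mp hm⟩
        rw [k2, pow_succ]; ring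
      rw [Finset.sum_congr rfl h1, Finset.sum_add_distrib]
      have h2 : ∑ m ∈ Finset.range M,
            (V (eqv α) i m * (t:ℤ)^m - V (eqv α) i (m+1) * (t:ℤ)^(m+1))
          = V (eqv α) i 0 * (t:ℤ)^0 - V (eqv α) i M * (t:ℤ)^M :=
        Finset.sum_range_sub' (fun m => V (eqv α) i m * (t:ℤ)^m) M
      rw [h2, hV0, hVM _ _ _ le_rfl]
      ring
    · rintro ⟨hbnds, heqs⟩
      have hya : ∀ k j, |y k j| ≤ (t:ℤ) - 1 := fun k j =>
        abs_le.mpr ⟨by linarith [(hbnds k j).1, ht2], (hbnds k j).2⟩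
      have hex : ∀ i : Fin p, ∃ v : ℕ → ℤ, v 0 = 0 ∧ (∀ m, |v m| ≤ 2*C) ∧
          (∀ m, M ≤ m → v m = 0) ∧
          ∀ m, (Lf i m y - β i m) = v m - (t:ℤ) * v (m + 1) := by
        intro i
        apply carries_exist M C (t:ℤ) ht2
        · intro m
          have h5 : |Lf i m y| ≤ (∑ kj : Fin n × Fin r, |c i kj.1 kj.2 m|) * ((t:ℤ)-1) := by
            rw [hLfdef]
            calc |∑ kj : Fin n × Fin r, c i kj.1 kj.2 m * y kj.1 kj.2|
                ≤ ∑ kj : Fin n × Fin r, |c i kj.1 kj.2 m * y kj.1 kj.2| :=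
                  Finset.abs_sum_le_sum_abs _ _
              _ ≤ ∑ kj : Fin n × Fin r, |c i kj.1 kj.2 m| * ((t:ℤ)-1) := by
                  refine Finset.sum_le_sum fun kj _ => ?_
                  rw [abs_mul]
                  exact mul_le_mul_of_nonneg_left (hya _ _) (abs_nonneg _)
              _ = (∑ kj : Fin n × Fin r, |c i kj.1 kj.2 m|) * ((t:ℤ)-1) := by
                  rw [Finset.sum_mul]
          have h6 : ((∑ kj : Fin n × Fin r, |c i kj.1 kj.2 m|) + |β i m|) * ((t:ℤ)-1)
              ≤ C * ((t:ℤ)-1) :=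
            mul_le_mul_of_nonneg_right (hcb i m) (by linarith)
          have h7 : 0 ≤ |β i m| * ((t:ℤ)-2) := mul_nonneg (abs_nonneg _) (by linarith)
          have habs2 : |Lf i m y - β i m| ≤ |Lf i m y| + |β i m| := abs_sub _ _
          nlinarith [h5, h6, h7, habs2, hC1, ht2, abs_nonneg (β i m)]
        · intro m hm
          rw [hLfdef, hβzero i m hm]
          simp only
          rw [Finset.sum_eq_zero fun kj _ => by rw [hczero i kj.1 kj.2 m hm, zero_mul]]
          ring
        · have h9 : ∑ m ∈ Finset.range M, (Lf i m y - β i m) * (t:ℤ)^m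
              = (∑ m ∈ Finset.range M, Lf i m y * (t:ℤ)^m)
                - ∑ m ∈ Finset.range M, β i m * (t:ℤ)^m := by
            rw [← Finset.sum_sub_distrib]
            exact Finset.sum_congr rfl fun m _ => by ring
          rw [h9, ← hrow t y i, ← hb1eval t i, heqs i]
          ring
      choose v hv0 hvb hvz hve using hex
      set u : S := fun i j => (⟨v i ((j:ℕ)+1), by
        rw [hBoxdef, Finset.mem_Icc]
        exact abs_le.mp (hvb i ((j:ℕ)+1))⟩ : {x : ℤ // x ∈ Box}) with hudef
      have hVv : ∀ (i : Fin p) (m : ℕ), V u i m = v i m := by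
        intro i m
        match m with
        | 0 => rw [hV0, hv0]
        | m'+1 =>
          by_cases h : m' < M'
          · have h10 : V u i ((⟨m', h⟩ : Fin M') + 1) = (u i ⟨m', h⟩ : ℤ) := hVval u i ⟨m', h⟩
            rw [h10]
          · rw [hVM u i (m'+1) (by omega), hvz i (m'+1) (by omega)]
      refine ⟨eqv.symm u, hbnds, ?_⟩
      apply (hKmem (eqv.symm u) y).mpr
      intro i m
      have h10 := hve i (m:ℕ)
      rw [Equiv.apply_symm_apply, hVv i (m:ℕ), hVv i ((m:ℕ)+1)]
      linarith [h10]
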